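/- arXiv:2411.14866 — 3 statements merged into one kernel-verified Lean document; each statement's English description precedes it below -/
import Mathlib

section
/- Let N ∈ ℕ, N ≥ 1, and set λ = −N. Then L₁ ω_N = 0 and L_{−1} ω_{−N} = 0, and consequently the (2N+1)-dimensional complex span of {ω_m : |m| ≤ N} is invariant under each of the operators L₁, L₀ and L_{−1} (so together they realise the finite-dimensional λ-Poincaré algebra). -/
/-! For `λ = -N` the functions `ω_m = r^N e^{imφ}` are polynomial in `r`, so
`L_k ω_m = (kN - m) ω_{k+m}` holds everywhere. For `|k| ≤ 1` and `|m| ≤ N` the index `k + m`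
can leave `[-N, N]` only when `m = kN = ±N`, and exactly then the coefficient vanishes; by
linearity of `L_k` on differentiable functions the span of `{ω_m : |m| ≤ N}` is invariant. -/

/-- Partial derivative in the first (radial) variable. -/
noncomputable def pr (f : ℝ × ℝ → ℂ) : ℝ × ℝ → ℂ :=
  fun p => deriv (fun s : ℝ => f (s, p.2)) p.1

/-- Partial derivative in the second (angular) variable. -/
noncomputable def pphi (f : ℝ × ℝ → ℂ) : ℝ × ℝ → ℂ :=
  fun p => deriv (fun t : ℝ => f (p.1, t)) p.2

/-- The super-rotation operator `L_n = i e^{inφ}(∂_φ - i n r ∂_r)`. -/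
noncomputable def Lop (n : ℤ) (f : ℝ × ℝ → ℂ) : ℝ × ℝ → ℂ :=
  fun p => Complex.I * Complex.exp (Complex.I * n * p.2) *
    (pphi f p - Complex.I * n * (p.1 : ℂ) * pr f p)

/-- The super-translation function `ω_m(r,φ) = r^{-λ} e^{imφ}`. -/
noncomputable def ω (lam : ℝ) (m : ℤ) : ℝ × ℝ → ℂ :=
  fun p => (p.1 : ℂ) ^ (-(lam : ℂ)) * Complex.exp (Complex.I * m * p.2)

open Complex

lemma ω_neg_natCast (N : ℕ) (m : ℤ) :
    ω (-(N : ℝ)) m = fun p => (p.1 : ℂ) ^ N * exp (I * m * p.2) := by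
  funext p
  rw [ω, show -((-(N : ℝ) : ℝ) : ℂ) = ((N : ℕ) : ℂ) by push_cast; ring, cpow_natCast]

lemma hasDerivAt_ofReal_pow_mul_const (N : ℕ) (c : ℂ) (r : ℝ) :
    HasDerivAt (fun s : ℝ => (s : ℂ) ^ N * c) (N * (r : ℂ) ^ (N - 1) * c) r :=
  ((hasDerivAt_pow N (r : ℂ)).comp_ofReal).mul_const c

lemma hasDerivAt_const_mul_exp_mul_I (c : ℂ) (m : ℤ) (φ : ℝ) :
    HasDerivAt (fun t : ℝ => c * exp (I * m * t)) (c * (exp (I * m * φ) * (I * m))) φ := by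
  have hlin : HasDerivAt (fun z : ℂ => I * m * z) (I * m) (φ : ℂ) := by
    simpa using (hasDerivAt_id (φ : ℂ)).const_mul (I * m)
  exact (hlin.cexp.comp_ofReal).const_mul c

theorem Lop_ω_neg_natCast (N : ℕ) (n m : ℤ) :
    Lop n (ω (-(N : ℝ)) m) = ((n * N - m : ℤ) : ℂ) • ω (-(N : ℝ)) (n + m) := by
  funext p
  obtain ⟨r, φ⟩ := p
  have hr : r * (N * (r : ℂ) ^ (N - 1)) = N * (r : ℂ) ^ N := by
    cases N with
    | zero => simp
    | succ N => simp only [Nat.add_sub_cancel, pow_succ]; ring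
  have he : exp (I * (n + m : ℤ) * φ) = exp (I * n * φ) * exp (I * m * φ) := by
    rw [← exp_add]; push_cast; ring_nf
  simp only [Lop, pr, pphi, ω_neg_natCast, Pi.smul_apply, smul_eq_mul,
    (hasDerivAt_ofReal_pow_mul_const N _ r).deriv,
    (hasDerivAt_const_mul_exp_mul_I _ m φ).deriv, he]
  push_cast
  linear_combination (-I ^ 2 * exp (I * n * φ) * exp (I * m * φ) * n) * hr
    + ((m : ℂ) - n * N) * (r : ℂ) ^ N * exp (I * n * φ) * exp (I * m * φ) * I_sq

def separatelyDifferentiable : Submodule ℂ (ℝ × ℝ → ℂ) where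
  carrier := {f | ∀ p : ℝ × ℝ, DifferentiableAt ℝ (fun s : ℝ => f (s, p.2)) p.1 ∧
    DifferentiableAt ℝ (fun t : ℝ => f (p.1, t)) p.2}
  zero_mem' _ := ⟨differentiableAt_const 0, differentiableAt_const 0⟩
  add_mem' hf hg p := ⟨(hf p).1.add (hg p).1, (hf p).2.add (hg p).2⟩
  smul_mem' c _ hf p := ⟨(hf p).1.const_smul c, (hf p).2.const_smul c⟩

lemma ω_neg_natCast_mem_separatelyDifferentiable (N : ℕ) (m : ℤ) :
    ω (-(N : ℝ)) m ∈ separatelyDifferentiable := by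
  rw [ω_neg_natCast]
  exact fun p => ⟨(hasDerivAt_ofReal_pow_mul_const N (exp (I * m * p.2)) p.1).differentiableAt,
    (hasDerivAt_const_mul_exp_mul_I ((p.1 : ℂ) ^ N) m p.2).differentiableAt⟩

lemma Lop_add {f g : ℝ × ℝ → ℂ} (hf : f ∈ separatelyDifferentiable)
    (hg : g ∈ separatelyDifferentiable) (k : ℤ) :
    Lop k (f + g) = Lop k f + Lop k g := by
  funext p
  simp only [Lop, pr, pphi, Pi.add_apply]
  rw [deriv_fun_add (hf p).1 (hg p).1, deriv_fun_add (hf p).2 (hg p).2]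
  ring

lemma Lop_smul (c : ℂ) (f : ℝ × ℝ → ℂ) (k : ℤ) : Lop k (c • f) = c • Lop k f := by
  funext p
  simp only [Lop, pr, pphi, Pi.smul_apply, smul_eq_mul, deriv_const_mul_field]
  ring

/-- `Lop k` is additive only on separately differentiable functions: elsewhere `deriv` takes
junk values. -/
theorem Lop_mem_of_mem_span {s : Set (ℝ × ℝ → ℂ)} {W : Submodule ℂ (ℝ × ℝ → ℂ)} {k : ℤ}
    (hs : s ⊆ separatelyDifferentiable) (hsW : ∀ g ∈ s, Lop k g ∈ W)
    {f : ℝ × ℝ → ℂ} (hf : f ∈ Submodule.span ℂ s) : Lop k f ∈ W := by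
  induction hf using Submodule.span_induction with
  | mem g hg => exact hsW g hg
  | zero => rw [← zero_smul ℂ (0 : ℝ × ℝ → ℂ), Lop_smul, zero_smul]; exact W.zero_mem
  | add g h hg hh hgW hhW =>
    rw [Lop_add (Submodule.span_le.mpr hs hg) (Submodule.span_le.mpr hs hh)]
    exact W.add_mem hgW hhW
  | smul c g _ hgW => rw [Lop_smul]; exact W.smul_mem c hgW

theorem Lop_ω_neg_natCast_mem_span (N : ℕ) {k m : ℤ} (hk : |k| ≤ 1) (hm : |m| ≤ N) :
    Lop k (ω (-(N : ℝ)) m) ∈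
      Submodule.span ℂ {g | ∃ m : ℤ, |m| ≤ (N : ℤ) ∧ g = ω (-(N : ℝ)) m} := by
  rw [Lop_ω_neg_natCast]
  by_cases hkm : |k + m| ≤ N
  · exact Submodule.smul_mem _ _ (Submodule.subset_span ⟨k + m, hkm, rfl⟩)
  · have hcoef : k * N - m = 0 := by
      rw [abs_le] at hk hm hkm
      obtain ⟨hk₁, hk₂⟩ := hk
      interval_cases k <;> omega
    rw [hcoef, Int.cast_zero, zero_smul]
    exact Submodule.zero_mem _

theorem lambda_poincare_finite_representation_general (N : ℕ) :
    (∀ p : ℝ × ℝ, 0 < p.1 → Lop 1 (ω (-(N : ℝ)) (N : ℤ)) p = 0) ∧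
    (∀ p : ℝ × ℝ, 0 < p.1 → Lop (-1) (ω (-(N : ℝ)) (-(N : ℤ))) p = 0) ∧
    (∀ f ∈ Submodule.span ℂ
        {g : ℝ × ℝ → ℂ | ∃ m : ℤ, |m| ≤ (N : ℤ) ∧ g = ω (-(N : ℝ)) m},
      ∀ k ∈ ({-1, 0, 1} : Set ℤ),
        Lop k f ∈ Submodule.span ℂ
          {g : ℝ × ℝ → ℂ | ∃ m : ℤ, |m| ≤ (N : ℤ) ∧ g = ω (-(N : ℝ)) m}) := by
  refine ⟨fun p _ => ?_, fun p _ => ?_, fun f hf k hk => ?_⟩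
  · simp [Lop_ω_neg_natCast]
  · simp [Lop_ω_neg_natCast]
  · have hk : |k| ≤ 1 := by rcases hk with rfl | rfl | rfl <;> norm_num
    refine Lop_mem_of_mem_span ?_ ?_ hf
    · rintro g ⟨m, -, rfl⟩
      exact ω_neg_natCast_mem_separatelyDifferentiable N m
    · rintro g ⟨m, hm, rfl⟩
      exact Lop_ω_neg_natCast_mem_span N hk hm

/-- Let `N ≥ 1` and `λ = -N`.  Then `L₁ ω_N = 0` and `L₋₁ ω_{-N} = 0`, and the
`(2N+1)`-dimensional complex span of `{ω_m : |m| ≤ N}` is invariant under each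
of `L₁`, `L₀` and `L₋₁` (the finite-dimensional λ-Poincaré algebra). -/
theorem lambda_poincare_finite_representation (N : ℕ) (hN : 1 ≤ N) :
    (∀ p : ℝ × ℝ, 0 < p.1 → Lop 1 (ω (-(N : ℝ)) (N : ℤ)) p = 0) ∧
    (∀ p : ℝ × ℝ, 0 < p.1 → Lop (-1) (ω (-(N : ℝ)) (-(N : ℤ))) p = 0) ∧
    (∀ f ∈ Submodule.span ℂ
        {g : ℝ × ℝ → ℂ | ∃ m : ℤ, |m| ≤ (N : ℤ) ∧ g = ω (-(N : ℝ)) m},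
      ∀ k ∈ ({-1, 0, 1} : Set ℤ),
        Lop k f ∈ Submodule.span ℂ
          {g : ℝ × ℝ → ℂ | ∃ m : ℤ, |m| ≤ (N : ℤ) ∧ g = ω (-(N : ℝ)) m}) :=
  lambda_poincare_finite_representation_general N
end

section
/- Let a, b : H → ℂ be smooth and let L = a ∂_r + b ∂_φ. Then L commutes with the Lorentz Casimir on all smooth functions, i.e. L(Ĉ₂ f) = Ĉ₂(L f) for every smooth f on H, if and only if ∂_r b ≡ 0 and r ∂_r a = a (equivalently a(r,φ) = r·c(φ) for some function c of φ alone). If in addition L is divergence-free with respect to the volume form dr ∧ dφ, i.e. ∂_r a + ∂_φ b = 0, then c = −b′, so the most general such operator is L = −r b′(φ) ∂_r + b(φ) ∂_φ. -/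
/-- The Lorentz Casimir operator `Ĉ₂ = r²∂_r² + 2r∂_r`. -/
noncomputable def C2 (f : ℝ × ℝ → ℂ) : ℝ × ℝ → ℂ :=
  fun p => (p.1 : ℂ) ^ 2 * pr (pr f) p + 2 * (p.1 : ℂ) * pr f p

/-- The first-order operator `L = a ∂_r + b ∂_φ`. -/
noncomputable def firstOrderOp (a b : ℝ × ℝ → ℂ) (f : ℝ × ℝ → ℂ) : ℝ × ℝ → ℂ :=
  fun p => a p * pr f p + b p * pphi f p

lemma sliceR (g : ℝ × ℝ → ℂ) (hg : ContDiff ℝ (⊤ : ℕ∞) g) (y : ℝ) :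
    ContDiff ℝ (⊤ : ℕ∞) (fun s : ℝ => g (s, y)) :=
  hg.comp (contDiff_id.prodMk contDiff_const)

lemma slicePhi (g : ℝ × ℝ → ℂ) (hg : ContDiff ℝ (⊤ : ℕ∞) g) (x : ℝ) :
    ContDiff ℝ (⊤ : ℕ∞) (fun t : ℝ => g (x, t)) :=
  hg.comp (contDiff_const.prodMk contDiff_id)

lemma hasDerivAt_sliceR (g : ℝ × ℝ → ℂ) (hg : ContDiff ℝ (⊤ : ℕ∞) g) (p : ℝ × ℝ) :
    HasDerivAt (fun s : ℝ => g (s, p.2)) (fderiv ℝ g p ((1:ℝ), (0:ℝ))) p.1 := by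
  have h1 : HasDerivAt (fun s : ℝ => ((s, p.2) : ℝ × ℝ)) ((1:ℝ), (0:ℝ)) p.1 := by
    have := (hasDerivAt_id p.1).prodMk (hasDerivAt_const p.1 p.2)
    simpa using this
  have h2 : HasFDerivAt g (fderiv ℝ g (p.1, p.2)) (p.1, p.2) :=
    (hg.differentiable (by simp) (p.1, p.2)).hasFDerivAt
  exact h2.comp_hasDerivAt p.1 h1

lemma hasDerivAt_slicePhi (g : ℝ × ℝ → ℂ) (hg : ContDiff ℝ (⊤ : ℕ∞) g) (p : ℝ × ℝ) :
    HasDerivAt (fun t : ℝ => g (p.1, t)) (fderiv ℝ g p ((0:ℝ), (1:ℝ))) p.2 := by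
  have h1 : HasDerivAt (fun t : ℝ => ((p.1, t) : ℝ × ℝ)) ((0:ℝ), (1:ℝ)) p.2 := by
    have := (hasDerivAt_const p.2 p.1).prodMk (hasDerivAt_id p.2)
    simpa using this
  have h2 : HasFDerivAt g (fderiv ℝ g (p.1, p.2)) (p.1, p.2) :=
    (hg.differentiable (by simp) (p.1, p.2)).hasFDerivAt
  exact h2.comp_hasDerivAt p.2 h1

lemma pr_eq (g : ℝ × ℝ → ℂ) (hg : ContDiff ℝ (⊤ : ℕ∞) g) (p : ℝ × ℝ) :
    pr g p = fderiv ℝ g p ((1:ℝ), (0:ℝ)) :=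
  (hasDerivAt_sliceR g hg p).deriv

lemma pphi_eq (g : ℝ × ℝ → ℂ) (hg : ContDiff ℝ (⊤ : ℕ∞) g) (p : ℝ × ℝ) :
    pphi g p = fderiv ℝ g p ((0:ℝ), (1:ℝ)) :=
  (hasDerivAt_slicePhi g hg p).deriv

lemma pr_smooth (g : ℝ × ℝ → ℂ) (hg : ContDiff ℝ (⊤ : ℕ∞) g) : ContDiff ℝ (⊤ : ℕ∞) (pr g) := by
  have h : ContDiff ℝ (⊤ : ℕ∞) fun p : ℝ × ℝ => fderiv ℝ g p ((1:ℝ), (0:ℝ)) :=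
    (hg.fderiv_right (by simp)).clm_apply contDiff_const
  have e : (fun p : ℝ × ℝ => fderiv ℝ g p ((1:ℝ), (0:ℝ))) = pr g := funext fun p => (pr_eq g hg p).symm
  exact e ▸ h

lemma pphi_smooth (g : ℝ × ℝ → ℂ) (hg : ContDiff ℝ (⊤ : ℕ∞) g) : ContDiff ℝ (⊤ : ℕ∞) (pphi g) := by
  have h : ContDiff ℝ (⊤ : ℕ∞) fun p : ℝ × ℝ => fderiv ℝ g p ((0:ℝ), (1:ℝ)) :=
    (hg.fderiv_right (by simp)).clm_apply contDiff_const
  have e : (fun p : ℝ × ℝ => fderiv ℝ g p ((0:ℝ), (1:ℝ))) = pphi g :=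
    funext fun p => (pphi_eq g hg p).symm
  exact e ▸ h

/-- Clairaut. -/
lemma pr_pphi_comm (g : ℝ × ℝ → ℂ) (hg : ContDiff ℝ (⊤ : ℕ∞) g) (p : ℝ × ℝ) :
    pr (pphi g) p = pphi (pr g) p := by
  have hsymm : IsSymmSndFDerivAt ℝ g p :=
    hg.contDiffAt.isSymmSndFDerivAt (by rw [minSmoothness_of_isRCLikeNormedField]; exact WithTop.coe_le_coe.mpr le_top)
  have hf' : ContDiff ℝ (⊤ : ℕ∞) (fderiv ℝ g) := hg.fderiv_right (by simp)
  -- rewrite pr (pphi g) p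
  have e1 : pphi g = fun q => (ContinuousLinearMap.apply ℝ ℂ ((0:ℝ),(1:ℝ))) (fderiv ℝ g q) :=
    funext fun q => pphi_eq g hg q
  have e2 : pr g = fun q => (ContinuousLinearMap.apply ℝ ℂ ((1:ℝ),(0:ℝ))) (fderiv ℝ g q) :=
    funext fun q => pr_eq g hg q
  have h1 : pr (pphi g) p = fderiv ℝ (fderiv ℝ g) p ((1:ℝ),(0:ℝ)) ((0:ℝ),(1:ℝ)) := by
    rw [e1]
    have hc : ContDiff ℝ (⊤ : ℕ∞) fun q => (ContinuousLinearMap.apply ℝ ℂ ((0:ℝ),(1:ℝ))) (fderiv ℝ g q) :=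
      (ContinuousLinearMap.apply ℝ ℂ ((0:ℝ),(1:ℝ))).contDiff.comp hf'
    rw [pr_eq _ hc p]
    rw [show (fun q => (ContinuousLinearMap.apply ℝ ℂ ((0:ℝ),(1:ℝ))) (fderiv ℝ g q))
      = (⇑(ContinuousLinearMap.apply ℝ ℂ ((0:ℝ),(1:ℝ))) ∘ fderiv ℝ g) from rfl]
    rw [fderiv_comp p (ContinuousLinearMap.apply ℝ ℂ ((0:ℝ),(1:ℝ))).differentiableAt
      (hf'.differentiable (by simp) p)]
    simp
  have h2 : pphi (pr g) p = fderiv ℝ (fderiv ℝ g) p ((0:ℝ),(1:ℝ)) ((1:ℝ),(0:ℝ)) := by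
    rw [e2]
    have hc : ContDiff ℝ (⊤ : ℕ∞) fun q => (ContinuousLinearMap.apply ℝ ℂ ((1:ℝ),(0:ℝ))) (fderiv ℝ g q) :=
      (ContinuousLinearMap.apply ℝ ℂ ((1:ℝ),(0:ℝ))).contDiff.comp hf'
    rw [pphi_eq _ hc p]
    rw [show (fun q => (ContinuousLinearMap.apply ℝ ℂ ((1:ℝ),(0:ℝ))) (fderiv ℝ g q))
      = (⇑(ContinuousLinearMap.apply ℝ ℂ ((1:ℝ),(0:ℝ))) ∘ fderiv ℝ g) from rfl]
    rw [fderiv_comp p (ContinuousLinearMap.apply ℝ ℂ ((1:ℝ),(0:ℝ))).differentiableAt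
      (hf'.differentiable (by simp) p)]
    simp
  rw [h1, h2, hsymm ((1:ℝ),(0:ℝ)) ((0:ℝ),(1:ℝ))]

lemma diffR (g : ℝ × ℝ → ℂ) (hg : ContDiff ℝ (⊤ : ℕ∞) g) (p : ℝ × ℝ) :
    DifferentiableAt ℝ (fun s : ℝ => g (s, p.2)) p.1 :=
  (sliceR g hg p.2).differentiable (by simp) p.1

lemma diffPhi (g : ℝ × ℝ → ℂ) (hg : ContDiff ℝ (⊤ : ℕ∞) g) (p : ℝ × ℝ) :
    DifferentiableAt ℝ (fun t : ℝ => g (p.1, t)) p.2 :=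
  (slicePhi g hg p.1).differentiable (by simp) p.2

lemma pr_add (g h : ℝ × ℝ → ℂ) (hg : ContDiff ℝ (⊤ : ℕ∞) g) (hh : ContDiff ℝ (⊤ : ℕ∞) h) (p : ℝ × ℝ) :
    pr (fun q => g q + h q) p = pr g p + pr h p :=
  deriv_add (diffR g hg p) (diffR h hh p)

lemma pphi_add (g h : ℝ × ℝ → ℂ) (hg : ContDiff ℝ (⊤ : ℕ∞) g) (hh : ContDiff ℝ (⊤ : ℕ∞) h) (p : ℝ × ℝ) :
    pphi (fun q => g q + h q) p = pphi g p + pphi h p :=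
  deriv_add (diffPhi g hg p) (diffPhi h hh p)

lemma pr_mul (g h : ℝ × ℝ → ℂ) (hg : ContDiff ℝ (⊤ : ℕ∞) g) (hh : ContDiff ℝ (⊤ : ℕ∞) h) (p : ℝ × ℝ) :
    pr (fun q => g q * h q) p = pr g p * h p + g p * pr h p :=
  deriv_mul (diffR g hg p) (diffR h hh p)

lemma pphi_mul (g h : ℝ × ℝ → ℂ) (hg : ContDiff ℝ (⊤ : ℕ∞) g) (hh : ContDiff ℝ (⊤ : ℕ∞) h) (p : ℝ × ℝ) :
    pphi (fun q => g q * h q) p = pphi g p * h p + g p * pphi h p :=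
  deriv_mul (diffPhi g hg p) (diffPhi h hh p)

lemma hasDerivAt_oc (s : ℝ) : HasDerivAt (fun t : ℝ => (t : ℂ)) 1 s := by
  simpa using (hasDerivAt_id s).ofReal_comp

lemma smooth_coord1 : ContDiff ℝ (⊤ : ℕ∞) (fun q : ℝ × ℝ => (q.1 : ℂ)) :=
  Complex.ofRealCLM.contDiff.comp contDiff_fst

lemma smooth_coord2 : ContDiff ℝ (⊤ : ℕ∞) (fun q : ℝ × ℝ => (q.2 : ℂ)) :=
  Complex.ofRealCLM.contDiff.comp contDiff_snd

lemma smooth_sq : ContDiff ℝ (⊤ : ℕ∞) (fun q : ℝ × ℝ => (q.1 : ℂ) ^ 2) := smooth_coord1.pow 2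

lemma smooth_two_coord1 : ContDiff ℝ (⊤ : ℕ∞) (fun q : ℝ × ℝ => 2 * (q.1 : ℂ)) :=
  contDiff_const.mul smooth_coord1

@[simp] lemma pr_coord1 (p : ℝ × ℝ) : pr (fun q : ℝ × ℝ => (q.1 : ℂ)) p = 1 :=
  (hasDerivAt_oc p.1).deriv

@[simp] lemma pr_coord2 (p : ℝ × ℝ) : pr (fun q : ℝ × ℝ => (q.2 : ℂ)) p = 0 := by
  simp [pr]

@[simp] lemma pphi_coord1 (p : ℝ × ℝ) : pphi (fun q : ℝ × ℝ => (q.1 : ℂ)) p = 0 := by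
  simp [pphi]

@[simp] lemma pphi_coord2 (p : ℝ × ℝ) : pphi (fun q : ℝ × ℝ => (q.2 : ℂ)) p = 1 :=
  (hasDerivAt_oc p.2).deriv

@[simp] lemma pr_const (c : ℂ) (p : ℝ × ℝ) : pr (fun _ : ℝ × ℝ => c) p = 0 := by simp [pr]

@[simp] lemma pphi_const (c : ℂ) (p : ℝ × ℝ) : pphi (fun _ : ℝ × ℝ => c) p = 0 := by
  simp [pphi]

@[simp] lemma pr_sq (p : ℝ × ℝ) : pr (fun q : ℝ × ℝ => (q.1 : ℂ) ^ 2) p = 2 * p.1 := by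
  have h : HasDerivAt (fun s : ℝ => ((s : ℂ)) ^ 2) (1 * (p.1 : ℂ) + (p.1 : ℂ) * 1) p.1 := by
    simpa [pow_two] using (hasDerivAt_oc p.1).fun_mul (hasDerivAt_oc p.1)
  have := h.deriv
  simp only [pr]
  rw [this]; ring

@[simp] lemma pphi_sq (p : ℝ × ℝ) : pphi (fun q : ℝ × ℝ => (q.1 : ℂ) ^ 2) p = 0 := by
  simp [pphi]

@[simp] lemma pr_two_coord1 (p : ℝ × ℝ) : pr (fun q : ℝ × ℝ => 2 * (q.1 : ℂ)) p = 2 := by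
  have := ((hasDerivAt_oc p.1).const_mul (2 : ℂ)).deriv
  simpa [pr] using this

@[simp] lemma pphi_two_coord1 (p : ℝ × ℝ) : pphi (fun q : ℝ × ℝ => 2 * (q.1 : ℂ)) p = 0 := by
  simp [pphi]

lemma pr_C2 (f : ℝ × ℝ → ℂ) (hf : ContDiff ℝ (⊤ : ℕ∞) f) (p : ℝ × ℝ) :
    pr (C2 f) p = 2 * (p.1 : ℂ) * pr (pr f) p + (p.1 : ℂ) ^ 2 * pr (pr (pr f)) p
      + 2 * pr f p + 2 * (p.1 : ℂ) * pr (pr f) p := by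
  have h1 : C2 f = fun q => (fun q : ℝ × ℝ => (q.1 : ℂ) ^ 2 * pr (pr f) q) q
      + (fun q : ℝ × ℝ => 2 * (q.1 : ℂ) * pr f q) q := rfl
  rw [h1, pr_add (fun q : ℝ × ℝ => (q.1 : ℂ) ^ 2 * pr (pr f) q)
        (fun q : ℝ × ℝ => 2 * (q.1 : ℂ) * pr f q)
        (smooth_sq.mul (pr_smooth _ (pr_smooth f hf)))
        (smooth_two_coord1.mul (pr_smooth f hf)) p,
      pr_mul (fun q : ℝ × ℝ => (q.1 : ℂ) ^ 2) (pr (pr f)) smooth_sq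
        (pr_smooth _ (pr_smooth f hf)) p,
      pr_mul (fun q : ℝ × ℝ => 2 * (q.1 : ℂ)) (pr f) smooth_two_coord1
        (pr_smooth f hf) p, pr_sq, pr_two_coord1]
  ring

lemma pphi_C2 (f : ℝ × ℝ → ℂ) (hf : ContDiff ℝ (⊤ : ℕ∞) f) (p : ℝ × ℝ) :
    pphi (C2 f) p = (p.1 : ℂ) ^ 2 * pphi (pr (pr f)) p + 2 * (p.1 : ℂ) * pphi (pr f) p := by
  have h1 : C2 f = fun q => (fun q : ℝ × ℝ => (q.1 : ℂ) ^ 2 * pr (pr f) q) q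
      + (fun q : ℝ × ℝ => 2 * (q.1 : ℂ) * pr f q) q := rfl
  rw [h1, pphi_add (fun q : ℝ × ℝ => (q.1 : ℂ) ^ 2 * pr (pr f) q)
        (fun q : ℝ × ℝ => 2 * (q.1 : ℂ) * pr f q)
        (smooth_sq.mul (pr_smooth _ (pr_smooth f hf)))
        (smooth_two_coord1.mul (pr_smooth f hf)) p,
      pphi_mul (fun q : ℝ × ℝ => (q.1 : ℂ) ^ 2) (pr (pr f)) smooth_sq
        (pr_smooth _ (pr_smooth f hf)) p,
      pphi_mul (fun q : ℝ × ℝ => 2 * (q.1 : ℂ)) (pr f) smooth_two_coord1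
        (pr_smooth f hf) p, pphi_sq, pphi_two_coord1]
  ring

lemma pr_L (a b f : ℝ × ℝ → ℂ) (ha : ContDiff ℝ (⊤ : ℕ∞) a) (hb : ContDiff ℝ (⊤ : ℕ∞) b)
    (hf : ContDiff ℝ (⊤ : ℕ∞) f) (p : ℝ × ℝ) :
    pr (firstOrderOp a b f) p = pr a p * pr f p + a p * pr (pr f) p
      + (pr b p * pphi f p + b p * pr (pphi f) p) := by
  have h1 : firstOrderOp a b f = fun q => (fun q => a q * pr f q) q
      + (fun q => b q * pphi f q) q := rfl
  rw [h1, pr_add (fun q => a q * pr f q) (fun q => b q * pphi f q)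
        (ha.mul (pr_smooth f hf)) (hb.mul (pphi_smooth f hf)) p,
      pr_mul a (pr f) ha (pr_smooth f hf) p,
      pr_mul b (pphi f) hb (pphi_smooth f hf) p]

lemma prr_L (a b f : ℝ × ℝ → ℂ) (ha : ContDiff ℝ (⊤ : ℕ∞) a) (hb : ContDiff ℝ (⊤ : ℕ∞) b)
    (hf : ContDiff ℝ (⊤ : ℕ∞) f) (p : ℝ × ℝ) :
    pr (pr (firstOrderOp a b f)) p
      = pr (pr a) p * pr f p + pr a p * pr (pr f) p
        + (pr a p * pr (pr f) p + a p * pr (pr (pr f)) p)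
        + (pr (pr b) p * pphi f p + pr b p * pr (pphi f) p
        + (pr b p * pr (pphi f) p + b p * pr (pr (pphi f)) p)) := by
  have hfun : pr (firstOrderOp a b f)
      = fun q => (fun q => pr a q * pr f q + a q * pr (pr f) q) q
        + (fun q => pr b q * pphi f q + b q * pr (pphi f) q) q :=
    funext fun q => pr_L a b f ha hb hf q
  have s1 : ContDiff ℝ (⊤ : ℕ∞) fun q => pr a q * pr f q :=
    (pr_smooth a ha).mul (pr_smooth f hf)
  have s2 : ContDiff ℝ (⊤ : ℕ∞) fun q => a q * pr (pr f) q :=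
    ha.mul (pr_smooth _ (pr_smooth f hf))
  have s3 : ContDiff ℝ (⊤ : ℕ∞) fun q => pr b q * pphi f q :=
    (pr_smooth b hb).mul (pphi_smooth f hf)
  have s4 : ContDiff ℝ (⊤ : ℕ∞) fun q => b q * pr (pphi f) q :=
    hb.mul (pr_smooth _ (pphi_smooth f hf))
  rw [hfun,
      pr_add (fun q => pr a q * pr f q + a q * pr (pr f) q)
        (fun q => pr b q * pphi f q + b q * pr (pphi f) q) (s1.add s2) (s3.add s4) p,
      pr_add (fun q => pr a q * pr f q) (fun q => a q * pr (pr f) q) s1 s2 p,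
      pr_add (fun q => pr b q * pphi f q) (fun q => b q * pr (pphi f) q) s3 s4 p,
      pr_mul (pr a) (pr f) (pr_smooth a ha) (pr_smooth f hf) p,
      pr_mul a (pr (pr f)) ha (pr_smooth _ (pr_smooth f hf)) p,
      pr_mul (pr b) (pphi f) (pr_smooth b hb) (pphi_smooth f hf) p,
      pr_mul b (pr (pphi f)) hb (pr_smooth _ (pphi_smooth f hf)) p]

lemma prr_b_zero (b : ℝ × ℝ → ℂ) (hb : ContDiff ℝ (⊤ : ℕ∞) b)
    (H : ∀ p : ℝ × ℝ, 0 < p.1 → pr b p = 0) (p : ℝ × ℝ) (hp : 0 < p.1) :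
    pr (pr b) p = 0 := by
  have hev : (fun s : ℝ => pr b (s, p.2)) =ᶠ[nhds p.1] fun _ => (0 : ℂ) := by
    filter_upwards [eventually_gt_nhds hp] with s hs
    exact H (s, p.2) hs
  have : pr (pr b) p = deriv (fun _ : ℝ => (0 : ℂ)) p.1 := hev.deriv_eq
  simpa using this

lemma prr_a_zero (a : ℝ × ℝ → ℂ) (ha : ContDiff ℝ (⊤ : ℕ∞) a)
    (H : ∀ p : ℝ × ℝ, 0 < p.1 → (p.1 : ℂ) * pr a p = a p) (p : ℝ × ℝ) (hp : 0 < p.1) :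
    pr (pr a) p = 0 := by
  have hr : ((p.1 : ℝ) : ℂ) ≠ 0 := by
    simpa using ne_of_gt hp
  have hev : (fun s : ℝ => pr a (s, p.2)) =ᶠ[nhds p.1]
      fun s : ℝ => a (s, p.2) * ((s : ℂ))⁻¹ := by
    filter_upwards [eventually_gt_nhds hp] with s hs
    have hs' : ((s : ℝ) : ℂ) ≠ 0 := by simpa using ne_of_gt hs
    have := H (s, p.2) hs
    field_simp
    linear_combination this
  have hda : HasDerivAt (fun s : ℝ => a (s, p.2)) (pr a p) p.1 := by
    have h := hasDerivAt_sliceR a ha p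
    rwa [← pr_eq a ha p] at h
  have hdi : HasDerivAt (fun s : ℝ => ((s : ℂ))⁻¹) (-(((p.1 : ℂ)) ^ 2)⁻¹ * 1) p.1 :=
    (hasDerivAt_inv hr).comp p.1 (hasDerivAt_oc p.1)
  have hprod := hda.fun_mul hdi
  have h1 : pr (pr a) p = pr a p * ((p.1 : ℂ))⁻¹ + a p * (-(((p.1 : ℂ)) ^ 2)⁻¹ * 1) := by
    have : pr (pr a) p = deriv (fun s : ℝ => a (s, p.2) * ((s : ℂ))⁻¹) p.1 := hev.deriv_eq
    rw [this, hprod.deriv]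
  rw [h1]
  have ha1 := H p hp
  field_simp
  linear_combination ha1

lemma sufficiency (a b : ℝ × ℝ → ℂ) (ha : ContDiff ℝ (⊤ : ℕ∞) a) (hb : ContDiff ℝ (⊤ : ℕ∞) b)
    (H : ∀ p : ℝ × ℝ, 0 < p.1 → pr b p = 0 ∧ (p.1 : ℂ) * pr a p = a p)
    (f : ℝ × ℝ → ℂ) (hf : ContDiff ℝ (⊤ : ℕ∞) f) (p : ℝ × ℝ) (hp : 0 < p.1) :
    firstOrderOp a b (C2 f) p = C2 (firstOrderOp a b f) p := by
  have hr : ((p.1 : ℝ) : ℂ) ≠ 0 := by simpa using ne_of_gt hp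
  have hb1 : pr b p = 0 := (H p hp).1
  have ha1 : (p.1 : ℂ) * pr a p = a p := (H p hp).2
  have hb2 : pr (pr b) p = 0 := prr_b_zero b hb (fun q hq => (H q hq).1) p hp
  have ha2 : pr (pr a) p = 0 := prr_a_zero a ha (fun q hq => (H q hq).2) p hp
  have c1 : pr (pphi f) p = pphi (pr f) p := pr_pphi_comm f hf p
  have c2 : pr (pr (pphi f)) p = pphi (pr (pr f)) p := by
    have e : pr (pphi f) = pphi (pr f) := funext (pr_pphi_comm f hf)
    rw [e]
    exact pr_pphi_comm (pr f) (pr_smooth f hf) p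
  have hL : firstOrderOp a b (C2 f) p = a p * pr (C2 f) p + b p * pphi (C2 f) p := rfl
  have hR : C2 (firstOrderOp a b f) p
      = (p.1 : ℂ) ^ 2 * pr (pr (firstOrderOp a b f)) p
        + 2 * (p.1 : ℂ) * pr (firstOrderOp a b f) p := rfl
  rw [hL, hR, pr_C2 f hf p, pphi_C2 f hf p, prr_L a b f ha hb hf p, pr_L a b f ha hb hf p,
      hb1, hb2, ha2, c1, c2]
  linear_combination (-(2 * pr f p + 2 * (p.1 : ℂ) * pr (pr f) p)) * ha1

@[simp] lemma pr_mul12 (p : ℝ × ℝ) :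
    pr (fun q : ℝ × ℝ => (q.1 : ℂ) * (q.2 : ℂ)) p = (p.2 : ℂ) := by
  have := ((hasDerivAt_oc p.1).mul_const ((p.2 : ℝ) : ℂ)).deriv
  simpa [pr] using this

@[simp] lemma pphi_mul12 (p : ℝ × ℝ) :
    pphi (fun q : ℝ × ℝ => (q.1 : ℂ) * (q.2 : ℂ)) p = (p.1 : ℂ) := by
  have := ((hasDerivAt_oc p.2).const_mul ((p.1 : ℝ) : ℂ)).deriv
  simpa [pphi] using this

@[simp] lemma pr_six_sq (p : ℝ × ℝ) :
    pr (fun q : ℝ × ℝ => 6 * (q.1 : ℂ) ^ 2) p = 12 * (p.1 : ℂ) := by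
  have h : HasDerivAt (fun s : ℝ => ((s : ℂ)) ^ 2) (1 * (p.1 : ℂ) + (p.1 : ℂ) * 1) p.1 := by
    simpa [pow_two] using (hasDerivAt_oc p.1).fun_mul (hasDerivAt_oc p.1)
  have := (h.const_mul (6 : ℂ)).deriv
  simp only [pr]
  rw [this]; ring

@[simp] lemma pphi_six_sq (p : ℝ × ℝ) :
    pphi (fun q : ℝ × ℝ => 6 * (q.1 : ℂ) ^ 2) p = 0 := by simp [pphi]

@[simp] lemma pr_two12 (p : ℝ × ℝ) :
    pr (fun q : ℝ × ℝ => 2 * (q.1 : ℂ) * (q.2 : ℂ)) p = 2 * (p.2 : ℂ) := by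
  have := (((hasDerivAt_oc p.1).const_mul (2 : ℂ)).mul_const ((p.2 : ℝ) : ℂ)).deriv
  simp only [pr]
  rw [show (fun s : ℝ => (fun q : ℝ × ℝ => 2 * (q.1 : ℂ) * (q.2 : ℂ)) (s, p.2))
    = fun s : ℝ => 2 * (s : ℂ) * ((p.2 : ℝ) : ℂ) from rfl, this]
  ring

@[simp] lemma pphi_two12 (p : ℝ × ℝ) :
    pphi (fun q : ℝ × ℝ => 2 * (q.1 : ℂ) * (q.2 : ℂ)) p = 2 * (p.1 : ℂ) := by
  have := ((hasDerivAt_oc p.2).const_mul (2 * ((p.1 : ℝ) : ℂ))).deriv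
  simp only [pphi]
  rw [show (fun t : ℝ => (fun q : ℝ × ℝ => 2 * (q.1 : ℂ) * (q.2 : ℂ)) (p.1, t))
    = fun t : ℝ => 2 * ((p.1 : ℝ) : ℂ) * (t : ℂ) from funext fun t => by ring, this]
  ring

lemma necessity (a b : ℝ × ℝ → ℂ) (ha : ContDiff ℝ (⊤ : ℕ∞) a) (hb : ContDiff ℝ (⊤ : ℕ∞) b)
    (H : ∀ f : ℝ × ℝ → ℂ, ContDiff ℝ (⊤ : ℕ∞) f → ∀ p : ℝ × ℝ, 0 < p.1 →
        firstOrderOp a b (C2 f) p = C2 (firstOrderOp a b f) p)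
    (p : ℝ × ℝ) (hp : 0 < p.1) :
    pr b p = 0 ∧ (p.1 : ℂ) * pr a p = a p := by
  have hr : ((p.1 : ℝ) : ℂ) ≠ 0 := by simpa using ne_of_gt hp
  -- function identities for pr/pphi of test functions
  have hpr1 : pr (fun q : ℝ × ℝ => ((q.2 : ℝ) : ℂ)) = fun _ => (0 : ℂ) :=
    funext fun q => pr_coord2 q
  have hpphi1 : pphi (fun q : ℝ × ℝ => ((q.2 : ℝ) : ℂ)) = fun _ => (1 : ℂ) :=
    funext fun q => pphi_coord2 q
  have hpr2 : pr (fun q : ℝ × ℝ => ((q.1 : ℝ) : ℂ)) = fun _ => (1 : ℂ) :=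
    funext fun q => pr_coord1 q
  have hpphi2 : pphi (fun q : ℝ × ℝ => ((q.1 : ℝ) : ℂ)) = fun _ => (0 : ℂ) :=
    funext fun q => pphi_coord1 q
  have hpr3 : pr (fun q : ℝ × ℝ => ((q.1 : ℝ) : ℂ) ^ 2) = fun q => 2 * ((q.1 : ℝ) : ℂ) :=
    funext fun q => pr_sq q
  have hpphi3 : pphi (fun q : ℝ × ℝ => ((q.1 : ℝ) : ℂ) ^ 2) = fun _ => (0 : ℂ) :=
    funext fun q => pphi_sq q
  have hpr4 : pr (fun q : ℝ × ℝ => ((q.1 : ℝ) : ℂ) * ((q.2 : ℝ) : ℂ))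
      = fun q => ((q.2 : ℝ) : ℂ) := funext fun q => pr_mul12 q
  have hpphi4 : pphi (fun q : ℝ × ℝ => ((q.1 : ℝ) : ℂ) * ((q.2 : ℝ) : ℂ))
      = fun q => ((q.1 : ℝ) : ℂ) := funext fun q => pphi_mul12 q
  -- C2 of the test functions
  have hC2_1 : C2 (fun q : ℝ × ℝ => ((q.2 : ℝ) : ℂ)) = fun _ => (0 : ℂ) := by
    funext q
    show ((q.1 : ℝ) : ℂ) ^ 2 * pr (pr (fun q : ℝ × ℝ => ((q.2 : ℝ) : ℂ))) q
      + 2 * ((q.1 : ℝ) : ℂ) * pr (fun q : ℝ × ℝ => ((q.2 : ℝ) : ℂ)) q = 0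
    simp only [hpr1, pr_const]
    ring
  have hC2_2 : C2 (fun q : ℝ × ℝ => ((q.1 : ℝ) : ℂ)) = fun q => 2 * ((q.1 : ℝ) : ℂ) := by
    funext q
    show ((q.1 : ℝ) : ℂ) ^ 2 * pr (pr (fun q : ℝ × ℝ => ((q.1 : ℝ) : ℂ))) q
      + 2 * ((q.1 : ℝ) : ℂ) * pr (fun q : ℝ × ℝ => ((q.1 : ℝ) : ℂ)) q = 2 * ((q.1 : ℝ) : ℂ)
    simp only [hpr2, pr_const]
    ring
  have hC2_3 : C2 (fun q : ℝ × ℝ => ((q.1 : ℝ) : ℂ) ^ 2) = fun q => 6 * ((q.1 : ℝ) : ℂ) ^ 2 := by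
    funext q
    show ((q.1 : ℝ) : ℂ) ^ 2 * pr (pr (fun q : ℝ × ℝ => ((q.1 : ℝ) : ℂ) ^ 2)) q
      + 2 * ((q.1 : ℝ) : ℂ) * pr (fun q : ℝ × ℝ => ((q.1 : ℝ) : ℂ) ^ 2) q = 6 * ((q.1 : ℝ) : ℂ) ^ 2
    simp only [hpr3, pr_two_coord1, pr_sq]
    ring
  have hC2_4 : C2 (fun q : ℝ × ℝ => ((q.1 : ℝ) : ℂ) * ((q.2 : ℝ) : ℂ))
      = fun q => 2 * ((q.1 : ℝ) : ℂ) * ((q.2 : ℝ) : ℂ) := by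
    funext q
    show ((q.1 : ℝ) : ℂ) ^ 2 * pr (pr (fun q : ℝ × ℝ => ((q.1 : ℝ) : ℂ) * ((q.2 : ℝ) : ℂ))) q
      + 2 * ((q.1 : ℝ) : ℂ) * pr (fun q : ℝ × ℝ => ((q.1 : ℝ) : ℂ) * ((q.2 : ℝ) : ℂ)) q
      = 2 * ((q.1 : ℝ) : ℂ) * ((q.2 : ℝ) : ℂ)
    simp only [hpr4, pr_coord2, pr_mul12]
    ring
  -- L of the test functions
  have hL1 : firstOrderOp a b (fun q : ℝ × ℝ => ((q.2 : ℝ) : ℂ)) = b := by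
    funext q
    show a q * pr (fun q : ℝ × ℝ => ((q.2 : ℝ) : ℂ)) q
      + b q * pphi (fun q : ℝ × ℝ => ((q.2 : ℝ) : ℂ)) q = b q
    rw [pr_coord2, pphi_coord2]
    ring
  have hL2 : firstOrderOp a b (fun q : ℝ × ℝ => ((q.1 : ℝ) : ℂ)) = a := by
    funext q
    show a q * pr (fun q : ℝ × ℝ => ((q.1 : ℝ) : ℂ)) q
      + b q * pphi (fun q : ℝ × ℝ => ((q.1 : ℝ) : ℂ)) q = a q
    rw [pr_coord1, pphi_coord1]
    ring
  have hL3 : firstOrderOp a b (fun q : ℝ × ℝ => ((q.1 : ℝ) : ℂ) ^ 2)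
      = fun q => a q * (2 * ((q.1 : ℝ) : ℂ)) := by
    funext q
    show a q * pr (fun q : ℝ × ℝ => ((q.1 : ℝ) : ℂ) ^ 2) q
      + b q * pphi (fun q : ℝ × ℝ => ((q.1 : ℝ) : ℂ) ^ 2) q = a q * (2 * ((q.1 : ℝ) : ℂ))
    rw [pr_sq, pphi_sq]
    ring
  have hL4 : firstOrderOp a b (fun q : ℝ × ℝ => ((q.1 : ℝ) : ℂ) * ((q.2 : ℝ) : ℂ))
      = fun q => a q * ((q.2 : ℝ) : ℂ) + b q * ((q.1 : ℝ) : ℂ) := by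
    funext q
    show a q * pr (fun q : ℝ × ℝ => ((q.1 : ℝ) : ℂ) * ((q.2 : ℝ) : ℂ)) q
      + b q * pphi (fun q : ℝ × ℝ => ((q.1 : ℝ) : ℂ) * ((q.2 : ℝ) : ℂ)) q
      = a q * ((q.2 : ℝ) : ℂ) + b q * ((q.1 : ℝ) : ℂ)
    rw [pr_mul12, pphi_mul12]
  -- Equation E1 (test f = φ)
  have E1 := H (fun q : ℝ × ℝ => ((q.2 : ℝ) : ℂ)) smooth_coord2 p hp
  rw [hC2_1, hL1] at E1
  have E1' : (0 : ℂ) = (p.1 : ℂ) ^ 2 * pr (pr b) p + 2 * (p.1 : ℂ) * pr b p := by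
    have l : firstOrderOp a b (fun _ : ℝ × ℝ => (0 : ℂ)) p = 0 := by
      show a p * pr (fun _ : ℝ × ℝ => (0 : ℂ)) p + b p * pphi (fun _ : ℝ × ℝ => (0 : ℂ)) p = 0
      rw [pr_const, pphi_const]; ring
    rw [l] at E1
    exact E1
  -- Equation E2 (test f = r)
  have E2 := H (fun q : ℝ × ℝ => ((q.1 : ℝ) : ℂ)) smooth_coord1 p hp
  rw [hC2_2, hL2] at E2
  have E2' : a p * 2 = (p.1 : ℂ) ^ 2 * pr (pr a) p + 2 * (p.1 : ℂ) * pr a p := by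
    have l : firstOrderOp a b (fun q : ℝ × ℝ => 2 * ((q.1 : ℝ) : ℂ)) p = a p * 2 := by
      show a p * pr (fun q : ℝ × ℝ => 2 * ((q.1 : ℝ) : ℂ)) p
        + b p * pphi (fun q : ℝ × ℝ => 2 * ((q.1 : ℝ) : ℂ)) p = a p * 2
      rw [pr_two_coord1, pphi_two_coord1]; ring
    rw [l] at E2
    exact E2
  -- Equation E3 (test f = r²)
  have E3 := H (fun q : ℝ × ℝ => ((q.1 : ℝ) : ℂ) ^ 2) smooth_sq p hp
  rw [hC2_3, hL3] at E3
  have hprg : pr (fun q => a q * (2 * ((q.1 : ℝ) : ℂ)))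
      = fun q => pr a q * (2 * ((q.1 : ℝ) : ℂ)) + a q * 2 := by
    funext q
    rw [pr_mul a (fun q : ℝ × ℝ => 2 * ((q.1 : ℝ) : ℂ)) ha smooth_two_coord1 q, pr_two_coord1]
  have E3' : a p * (12 * (p.1 : ℂ))
      = (p.1 : ℂ) ^ 2 * (pr (pr a) p * (2 * (p.1 : ℂ)) + pr a p * 2 + (pr a p * 2 + a p * 0))
        + 2 * (p.1 : ℂ) * (pr a p * (2 * (p.1 : ℂ)) + a p * 2) := by
    have l : firstOrderOp a b (fun q : ℝ × ℝ => 6 * ((q.1 : ℝ) : ℂ) ^ 2) p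
        = a p * (12 * (p.1 : ℂ)) := by
      show a p * pr (fun q : ℝ × ℝ => 6 * ((q.1 : ℝ) : ℂ) ^ 2) p
        + b p * pphi (fun q : ℝ × ℝ => 6 * ((q.1 : ℝ) : ℂ) ^ 2) p = a p * (12 * (p.1 : ℂ))
      rw [pr_six_sq, pphi_six_sq]; ring
    have rr : C2 (fun q => a q * (2 * ((q.1 : ℝ) : ℂ))) p
        = (p.1 : ℂ) ^ 2 * (pr (pr a) p * (2 * (p.1 : ℂ)) + pr a p * 2 + (pr a p * 2 + a p * 0))
          + 2 * (p.1 : ℂ) * (pr a p * (2 * (p.1 : ℂ)) + a p * 2) := by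
      show (p.1 : ℂ) ^ 2 * pr (pr (fun q => a q * (2 * ((q.1 : ℝ) : ℂ)))) p
        + 2 * (p.1 : ℂ) * pr (fun q => a q * (2 * ((q.1 : ℝ) : ℂ))) p = _
      rw [hprg,
        pr_add (fun q => pr a q * (2 * ((q.1 : ℝ) : ℂ))) (fun q => a q * 2)
          ((pr_smooth a ha).mul smooth_two_coord1) (ha.mul contDiff_const) p,
        pr_mul (pr a) (fun q : ℝ × ℝ => 2 * ((q.1 : ℝ) : ℂ)) (pr_smooth a ha)
          smooth_two_coord1 p,
        pr_mul a (fun _ : ℝ × ℝ => (2 : ℂ)) ha contDiff_const p, pr_two_coord1, pr_const]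
    rw [l, rr] at E3
    exact E3
  -- Equation E4 (test f = r·φ)
  have E4 := H (fun q : ℝ × ℝ => ((q.1 : ℝ) : ℂ) * ((q.2 : ℝ) : ℂ))
    (smooth_coord1.mul smooth_coord2) p hp
  rw [hC2_4, hL4] at E4
  have hprg4 : pr (fun q => a q * ((q.2 : ℝ) : ℂ) + b q * ((q.1 : ℝ) : ℂ))
      = fun q => (pr a q * ((q.2 : ℝ) : ℂ) + a q * 0)
        + (pr b q * ((q.1 : ℝ) : ℂ) + b q * 1) := by
    funext q
    rw [pr_add (fun q => a q * ((q.2 : ℝ) : ℂ)) (fun q => b q * ((q.1 : ℝ) : ℂ))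
        (ha.mul smooth_coord2) (hb.mul smooth_coord1) q,
      pr_mul a (fun q : ℝ × ℝ => ((q.2 : ℝ) : ℂ)) ha smooth_coord2 q,
      pr_mul b (fun q : ℝ × ℝ => ((q.1 : ℝ) : ℂ)) hb smooth_coord1 q,
      pr_coord1, pr_coord2]
  have E4' : a p * (2 * (p.2 : ℂ)) + b p * (2 * (p.1 : ℂ))
      = (p.1 : ℂ) ^ 2 * (pr (pr a) p * ((p.2 : ℝ) : ℂ) + pr (pr b) p * ((p.1 : ℝ) : ℂ)
          + 2 * pr b p)
        + 2 * (p.1 : ℂ) * (pr a p * ((p.2 : ℝ) : ℂ) + pr b p * ((p.1 : ℝ) : ℂ) + b p) := by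
    have l : firstOrderOp a b (fun q : ℝ × ℝ => 2 * ((q.1 : ℝ) : ℂ) * ((q.2 : ℝ) : ℂ)) p
        = a p * (2 * (p.2 : ℂ)) + b p * (2 * (p.1 : ℂ)) := by
      show a p * pr (fun q : ℝ × ℝ => 2 * ((q.1 : ℝ) : ℂ) * ((q.2 : ℝ) : ℂ)) p
        + b p * pphi (fun q : ℝ × ℝ => 2 * ((q.1 : ℝ) : ℂ) * ((q.2 : ℝ) : ℂ)) p = _
      rw [pr_two12, pphi_two12]
    have rr : C2 (fun q => a q * ((q.2 : ℝ) : ℂ) + b q * ((q.1 : ℝ) : ℂ)) p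
        = (p.1 : ℂ) ^ 2 * (pr (pr a) p * ((p.2 : ℝ) : ℂ) + pr (pr b) p * ((p.1 : ℝ) : ℂ)
            + 2 * pr b p)
          + 2 * (p.1 : ℂ) * (pr a p * ((p.2 : ℝ) : ℂ) + pr b p * ((p.1 : ℝ) : ℂ) + b p) := by
      show (p.1 : ℂ) ^ 2
          * pr (pr (fun q => a q * ((q.2 : ℝ) : ℂ) + b q * ((q.1 : ℝ) : ℂ))) p
        + 2 * (p.1 : ℂ)
          * pr (fun q => a q * ((q.2 : ℝ) : ℂ) + b q * ((q.1 : ℝ) : ℂ)) p = _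
      rw [hprg4,
        pr_add (fun q => pr a q * ((q.2 : ℝ) : ℂ) + a q * 0)
          (fun q => pr b q * ((q.1 : ℝ) : ℂ) + b q * 1)
          (((pr_smooth a ha).mul smooth_coord2).add (ha.mul contDiff_const))
          (((pr_smooth b hb).mul smooth_coord1).add (hb.mul contDiff_const)) p,
        pr_add (fun q => pr a q * ((q.2 : ℝ) : ℂ)) (fun q => a q * 0)
          ((pr_smooth a ha).mul smooth_coord2) (ha.mul contDiff_const) p,
        pr_add (fun q => pr b q * ((q.1 : ℝ) : ℂ)) (fun q => b q * 1)
          ((pr_smooth b hb).mul smooth_coord1) (hb.mul contDiff_const) p,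
        pr_mul (pr a) (fun q : ℝ × ℝ => ((q.2 : ℝ) : ℂ)) (pr_smooth a ha) smooth_coord2 p,
        pr_mul a (fun _ : ℝ × ℝ => (0 : ℂ)) ha contDiff_const p,
        pr_mul (pr b) (fun q : ℝ × ℝ => ((q.1 : ℝ) : ℂ)) (pr_smooth b hb) smooth_coord1 p,
        pr_mul b (fun _ : ℝ × ℝ => (1 : ℂ)) hb contDiff_const p,
        pr_coord1, pr_coord2, pr_const, pr_const]
      ring
    rw [l, rr] at E4
    exact E4
  refine ⟨?_, ?_⟩
  · have key : (2 * (p.1 : ℂ) ^ 2) * pr b p = (2 * (p.1 : ℂ) ^ 2) * 0 := by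
      linear_combination ((p.2 : ℝ) : ℂ) * E2' + ((p.1 : ℝ) : ℂ) * E1' - E4'
    have hne : (2 * (p.1 : ℂ) ^ 2) ≠ 0 := mul_ne_zero two_ne_zero (pow_ne_zero 2 hr)
    simpa using mul_left_cancel₀ hne key
  · have key : (4 * (p.1 : ℂ)) * ((p.1 : ℂ) * pr a p) = (4 * (p.1 : ℂ)) * a p := by
      linear_combination (-1 : ℂ) * E3' + (2 * ((p.1 : ℝ) : ℂ)) * E2'
    have hne : (4 * (p.1 : ℂ)) ≠ 0 := mul_ne_zero (by norm_num) hr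
    exact mul_left_cancel₀ hne key


/-- Let `a,b` be smooth and `L = a ∂_r + b ∂_φ`.  Then `L` commutes with the Lorentz
Casimir on all smooth functions on the half-plane iff `∂_r b ≡ 0` and `r ∂_r a = a`
there.  If in addition `L` is divergence-free, i.e. `∂_r a + ∂_φ b = 0`, then
`a = -r ∂_φ b`, i.e. `L = -r b'(φ) ∂_r + b(φ) ∂_φ`. -/
theorem first_order_ops_commuting_with_casimir (a b : ℝ × ℝ → ℂ)
    (ha : ContDiff ℝ (⊤ : ℕ∞) a) (hb : ContDiff ℝ (⊤ : ℕ∞) b) :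
    ((∀ f : ℝ × ℝ → ℂ, ContDiff ℝ (⊤ : ℕ∞) f → ∀ p : ℝ × ℝ, 0 < p.1 →
        firstOrderOp a b (C2 f) p = C2 (firstOrderOp a b f) p)
      ↔ (∀ p : ℝ × ℝ, 0 < p.1 → pr b p = 0 ∧ (p.1 : ℂ) * pr a p = a p)) ∧
    ((∀ f : ℝ × ℝ → ℂ, ContDiff ℝ (⊤ : ℕ∞) f → ∀ p : ℝ × ℝ, 0 < p.1 →
        firstOrderOp a b (C2 f) p = C2 (firstOrderOp a b f) p) →
      (∀ p : ℝ × ℝ, 0 < p.1 → pr a p + pphi b p = 0) →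
      ∀ p : ℝ × ℝ, 0 < p.1 → a p = -(p.1 : ℂ) * pphi b p) := by
  constructor
  · constructor
    · intro H p hp
      exact necessity a b ha hb H p hp
    · intro H f hf p hp
      exact sufficiency a b ha hb H f hf p hp
  · intro Hcomm Hdiv p hp
    obtain ⟨hb1, ha1⟩ := necessity a b ha hb Hcomm p hp
    have hd := Hdiv p hp
    linear_combination ((p.1 : ℝ) : ℂ) * hd - ha1
end

section
/- Fix λ ∈ ℤ. Every 2-cocycle φ on the centreless Weyl λ-BMS algebra 𝔴_λ with values in the trivial module ℝ satisfies φ(L_m, P_n) = (n + λm) φ(P_{m+n}, D_0) for all m, n ∈ ℤ. (In particular, after subtracting a suitable coboundary, a 2-cocycle has no central term in the bracket [L_m, P_n]; this is why the central extension c_P of the BMS algebra does not survive in the Weyl BMS algebra.) -/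
/-- Basis labels for the centreless Weyl λ-BMS algebra. -/
inductive WGen : Type
  | L : ℤ → WGen
  | D : ℤ → WGen
  | P : ℤ → WGen

/-- The bracket on basis elements of the centreless Weyl λ-BMS algebra. -/
noncomputable def wbGen (lam : ℤ) : WGen → WGen → (WGen →₀ ℝ)
  | WGen.L n, WGen.L m => ((n : ℝ) - m) • Finsupp.single (WGen.L (n + m)) 1
  | WGen.L n, WGen.D m => (-(m : ℝ)) • Finsupp.single (WGen.D (n + m)) 1
  | WGen.D m, WGen.L n => ((m : ℝ)) • Finsupp.single (WGen.D (n + m)) 1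
  | WGen.L n, WGen.P m => (-((m : ℝ) + (lam : ℝ) * n)) • Finsupp.single (WGen.P (n + m)) 1
  | WGen.P m, WGen.L n => (((m : ℝ) + (lam : ℝ) * n)) • Finsupp.single (WGen.P (n + m)) 1
  | WGen.D n, WGen.P m => Finsupp.single (WGen.P (n + m)) 1
  | WGen.P m, WGen.D n => -(Finsupp.single (WGen.P (n + m)) 1)
  | _, _ => 0

/-- The bilinear extension of `wbGen` to the free real vector space on `WGen`. -/
noncomputable def wbr (lam : ℤ) (x y : WGen →₀ ℝ) : WGen →₀ ℝ :=
  x.sum fun gx cx => y.sum fun gy cy => (cx * cy) • wbGen lam gx gy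

/-- Fix `λ ∈ ℤ`.  Every 2-cocycle `φ` on the centreless Weyl λ-BMS algebra
with values in the trivial module `ℝ` satisfies
`φ(L_m, P_n) = (n + λm) φ(P_{m+n}, D_0)` for all `m, n ∈ ℤ`. -/
theorem weyl_lambda_bms_no_LP_central_term (lam : ℤ)
    (φ : (WGen →₀ ℝ) →ₗ[ℝ] (WGen →₀ ℝ) →ₗ[ℝ] ℝ)
    (halt : ∀ x : WGen →₀ ℝ, φ x x = 0)
    (hcoc : ∀ x y z : WGen →₀ ℝ,
      φ (wbr lam x y) z + φ (wbr lam y z) x + φ (wbr lam z x) y = 0) :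
    ∀ m n : ℤ,
      φ (Finsupp.single (WGen.L m) 1) (Finsupp.single (WGen.P n) 1)
        = ((n : ℝ) + (lam : ℝ) * m) *
          φ (Finsupp.single (WGen.P (m + n)) 1) (Finsupp.single (WGen.D 0) 1) := by

  intro m n
  have hwbr : ∀ g g' : WGen, wbr lam (Finsupp.single g 1) (Finsupp.single g' 1) = wbGen lam g g' := by
    intro g g'
    unfold wbr
    rw [Finsupp.sum_single_index, Finsupp.sum_single_index] <;> simp
  have hskew : ∀ x y : WGen →₀ ℝ, φ x y = - φ y x := by
    intro x y
    have h := halt (x + y)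
    simp [map_add, halt] at h
    linarith
  have h := hcoc (Finsupp.single (WGen.L m) 1) (Finsupp.single (WGen.D 0) 1)
    (Finsupp.single (WGen.P n) 1)
  rw [hwbr, hwbr, hwbr] at h
  simp only [wbGen] at h
  push_cast at h
  simp only [neg_zero, zero_smul, map_zero, LinearMap.zero_apply, map_smul, one_smul,
    smul_eq_mul, zero_add] at h
  rw [hskew (Finsupp.single (WGen.P n) 1) (Finsupp.single (WGen.L m) 1)] at h
  have : φ (Finsupp.single (WGen.L m) 1) (Finsupp.single (WGen.P n) 1)
      = ((n : ℝ) + (lam : ℝ) * m) * φ (Finsupp.single (WGen.P (m + n)) 1) (Finsupp.single (WGen.D 0) 1) := by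
    simp only [LinearMap.smul_apply, smul_eq_mul] at h
    linarith
  exact this
end
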